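/- The only integers n with 2 ≤ n < 677343 for which n(n+6)(n+5)(n²+15n+8)²/(168(n³+27n²+356n-240)) is a positive integer are n = 2, n = 4, and n = 9 (with values 2, 9, and 96 respectively). -/
import Mathlib

noncomputable def bn82 (n : ℕ) : ℝ :=
  (n : ℝ) * ((n : ℝ) + 6) * ((n : ℝ) + 5) * ((n : ℝ) ^ 2 + 15 * (n : ℝ) + 8) ^ 2
    / (168 * ((n : ℝ) ^ 3 + 27 * (n : ℝ) ^ 2 + 356 * (n : ℝ) - 240))

private def fN (n : ℕ) : ℕ := n * (n + 6) * (n + 5) * (n ^ 2 + 15 * n + 8) ^ 2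
private def dN (n : ℕ) : ℕ := n ^ 3 + 27 * n ^ 2 + 356 * n - 240

set_option maxRecDepth 100000 in
private lemma fc_bool : ((List.range' 2 1229).all
    fun n => !(decide (168 * dN n ∣ fN n)) || decide (n = 2 ∨ n = 4 ∨ n = 9)) = true := by
  decide

private lemma finite_check (n : ℕ) (h2 : 2 ≤ n) (hlt : n < 1231)
    (hd : 168 * dN n ∣ fN n) : n = 2 ∨ n = 4 ∨ n = 9 := by
  have h := fc_bool
  rw [List.all_eq_true] at h
  have h' := h n (by rw [List.mem_range'_1]; omega)
  simp only [Bool.or_eq_true, Bool.not_eq_true', decide_eq_true_eq,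
    decide_eq_false_iff_not] at h'
  rcases h' with h' | h'
  · exact absurd hd h'
  · exact h'

private lemma dN_cast (n : ℕ) (h : 2 ≤ n) :
    (dN n : ℤ) = (n : ℤ) ^ 3 + 27 * (n : ℤ) ^ 2 + 356 * (n : ℤ) - 240 := by
  have h240 : 240 ≤ n ^ 3 + 27 * n ^ 2 + 356 * n := by nlinarith
  unfold dN
  push_cast [h240]
  ring

private lemma fN_cast (n : ℕ) :
    (fN n : ℤ) = (n : ℤ) * ((n : ℤ) + 6) * ((n : ℤ) + 5)
      * ((n : ℤ) ^ 2 + 15 * (n : ℤ) + 8) ^ 2 := by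
  unfold fN; push_cast; ring

/-- Integrality check for `b_{n,{8,2}}` in the range `2 ≤ n < 677343`. -/
theorem bn82_integral_cases :
    (∀ n : ℕ, 2 ≤ n → n < 677343 →
        ((∃ m : ℤ, 0 < m ∧ bn82 n = m) ↔ n = 2 ∨ n = 4 ∨ n = 9))
      ∧ bn82 2 = 2 ∧ bn82 4 = 9 ∧ bn82 9 = 96 := by
  refine ⟨?_, by norm_num [bn82], by norm_num [bn82], by norm_num [bn82]⟩
  intro n h2 hlt
  have h2' : (2 : ℤ) ≤ (n : ℤ) := by exact_mod_cast h2
  have hdpos : (0 : ℤ) < (n : ℤ) ^ 3 + 27 * (n : ℤ) ^ 2 + 356 * (n : ℤ) - 240 := by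
    nlinarith
  have hGpos : (0 : ℤ) < 168 * ((n : ℤ) ^ 3 + 27 * (n : ℤ) ^ 2 + 356 * (n : ℤ) - 240) := by
    linarith
  have hfpos : (0 : ℤ) < (n : ℤ) * ((n : ℤ) + 6) * ((n : ℤ) + 5)
      * ((n : ℤ) ^ 2 + 15 * (n : ℤ) + 8) ^ 2 :=
    mul_pos (mul_pos (mul_pos (by linarith) (by linarith)) (by linarith))
      (pow_pos (by nlinarith) 2)
  have hcastG : ((168 * ((n : ℤ) ^ 3 + 27 * (n : ℤ) ^ 2 + 356 * (n : ℤ) - 240) : ℤ) : ℝ)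
      = 168 * ((n : ℝ) ^ 3 + 27 * (n : ℝ) ^ 2 + 356 * (n : ℝ) - 240) := by
    push_cast; ring
  have hgR : (168 * ((n : ℝ) ^ 3 + 27 * (n : ℝ) ^ 2 + 356 * (n : ℝ) - 240)) ≠ 0 := by
    rw [← hcastG]; exact_mod_cast hGpos.ne'
  have hiff : (∃ m : ℤ, 0 < m ∧ bn82 n = m) ↔
      (168 * ((n : ℤ) ^ 3 + 27 * (n : ℤ) ^ 2 + 356 * (n : ℤ) - 240)) ∣
        ((n : ℤ) * ((n : ℤ) + 6) * ((n : ℤ) + 5)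
          * ((n : ℤ) ^ 2 + 15 * (n : ℤ) + 8) ^ 2) := by
    constructor
    · rintro ⟨m, _, hbm⟩
      refine ⟨m, ?_⟩
      unfold bn82 at hbm
      rw [div_eq_iff hgR] at hbm
      have hcast : (((n : ℤ) * ((n : ℤ) + 6) * ((n : ℤ) + 5)
            * ((n : ℤ) ^ 2 + 15 * (n : ℤ) + 8) ^ 2 : ℤ) : ℝ)
          = ((168 * ((n : ℤ) ^ 3 + 27 * (n : ℤ) ^ 2 + 356 * (n : ℤ) - 240) * m : ℤ) : ℝ) := by
        push_cast
        push_cast at hbm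
        linarith
      exact_mod_cast hcast
    · rintro ⟨m, hm⟩
      have hmpos : 0 < m := by
        rcases lt_or_ge 0 m with h | h
        · exact h
        · exfalso
          have : 168 * ((n : ℤ) ^ 3 + 27 * (n : ℤ) ^ 2 + 356 * (n : ℤ) - 240) * m ≤ 0 :=
            mul_nonpos_of_nonneg_of_nonpos hGpos.le h
          rw [← hm] at this
          linarith
      refine ⟨m, hmpos, ?_⟩
      unfold bn82
      rw [div_eq_iff hgR]
      have hcast := congrArg (fun z : ℤ => (z : ℝ)) hm
      push_cast at hcast
      push_cast
      linarith
  rw [hiff]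
  constructor
  · intro hdvd
    have hd_dvd_f : ((n : ℤ) ^ 3 + 27 * (n : ℤ) ^ 2 + 356 * (n : ℤ) - 240) ∣
        ((n : ℤ) * ((n : ℤ) + 6) * ((n : ℤ) + 5)
          * ((n : ℤ) ^ 2 + 15 * (n : ℤ) + 8) ^ 2) :=
      dvd_trans ⟨168, by ring⟩ hdvd
    have hd_dvd_r : ((n : ℤ) ^ 3 + 27 * (n : ℤ) ^ 2 + 356 * (n : ℤ) - 240) ∣
        (-169344) * (4 * (n : ℤ) ^ 2 - 26 * (n : ℤ) + 15) := by
      obtain ⟨c, hc⟩ := hd_dvd_f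
      exact ⟨c - ((n : ℤ) ^ 4 + 14 * (n : ℤ) ^ 3 - 133 * (n : ℤ) ^ 2 + 2638 * (n : ℤ)
        - 10584), by linear_combination hc⟩
    have hd_dvd_K : ((n : ℤ) ^ 3 + 27 * (n : ℤ) ^ 2 + 356 * (n : ℤ) - 240) ∣
        (1867017600 : ℤ) := by
      obtain ⟨c, hc⟩ := hd_dvd_r
      exact ⟨-169344 * (14248 - 2432 * (n : ℤ))
        + (608 * (n : ℤ) ^ 2 + 16806 * (n : ℤ) + 227233) * c,
        by linear_combination (608 * (n : ℤ) ^ 2 + 16806 * (n : ℤ) + 227233) * hc⟩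
    have hn_small : n < 1231 := by
      by_contra hge
      push_neg at hge
      have hxge : (1231 : ℤ) ≤ (n : ℤ) := by exact_mod_cast hge
      have hdbig : (1867017600 : ℤ) < (n : ℤ) ^ 3 + 27 * (n : ℤ) ^ 2 + 356 * (n : ℤ) - 240 := by
        nlinarith [sq_nonneg ((n : ℤ) - 1231)]
      have := Int.le_of_dvd (by norm_num) hd_dvd_K
      omega
    have hdvdN : 168 * dN n ∣ fN n := by
      have hc : ((168 * dN n : ℕ) : ℤ) ∣ ((fN n : ℕ) : ℤ) := by
        push_cast [dN_cast n h2, fN_cast n]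
        convert hdvd using 2
      exact_mod_cast hc
    exact finite_check n h2 hn_small hdvdN
  · rintro (rfl | rfl | rfl)
    · exact ⟨2, by norm_num⟩
    · exact ⟨9, by norm_num⟩
    · exact ⟨96, by norm_num⟩
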